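/- arXiv:2508.20367 — 3 statements merged into one kernel-verified Lean document; each statement's English description precedes it below -/
import Mathlib

section
/- Let f : ℝⁿ × ℝ → ℝⁿ be globally Lipschitz with constant C_f and f(0,0) = 0, and let 0 < D̲ ≤ D̄, X̄ > 0, Ū > 0. Suppose P₁ is a predictor for (X₁, U₁, φ₁) and P₂ is a predictor for (X₂, U₂, φ₂), where |X₁|, |X₂| ≤ X̄, sup_{s∈[0,1]}|U₁(s)|, sup_{s∈[0,1]}|U₂(s)| ≤ Ū, and φ₁, φ₂ ∈ [D̲, D̄]. Then sup_{s∈[0,1]} |P₁(s) − P₂(s)| ≤ C_P ( |X₁ − X₂| + sup_{s∈[0,1]} |U₁(s) − U₂(s)| + |φ₁ − φ₂| ), where C_P = e^{D̄ C_f} max{1, Ξ, D̄ C_f} and Ξ = C_f [ Ū + e^{D̄ C_f}(X̄ + C_f D̄ Ū) ]. -/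
open Set MeasureTheory

open intervalIntegral Topology in
lemma aux_deriv {E : Type*} [NormedAddCommGroup E] [NormedSpace ℝ E] [CompleteSpace E]
    (g : ℝ → E) (hg : ContinuousOn g (Icc 0 1)) (P : ℝ → E) (X : E) (φ : ℝ)
    (hPeq : ∀ s ∈ Icc (0:ℝ) 1, P s = X + φ • ∫ θ in (0:ℝ)..s, g θ)
    {x : ℝ} (hx : x ∈ Ico (0:ℝ) 1) :
    HasDerivWithinAt P (φ • g x) (Ici x) x := by
  have hx' : x ∈ Icc (0:ℝ) 1 := ⟨hx.1, hx.2.le⟩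
  haveI : Fact (x ∈ Icc (0:ℝ) 1) := ⟨hx'⟩
  have hint : IntervalIntegrable g volume 0 x :=
    (hg.mono (by rw [uIcc_of_le hx.1]; exact Icc_subset_Icc le_rfl hx.2.le)).intervalIntegrable
  have hmeas : StronglyMeasurableAtFilter g (𝓝[Icc (0:ℝ) 1] x) :=
    hg.stronglyMeasurableAtFilter_nhdsWithin measurableSet_Icc x
  have hFTC : HasDerivWithinAt (fun s => ∫ θ in (0:ℝ)..s, g θ) (g x) (Icc 0 1) x :=
    integral_hasDerivWithinAt_right hint hmeas (hg.continuousWithinAt hx')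
  have hF : HasDerivWithinAt (fun s => X + φ • ∫ θ in (0:ℝ)..s, g θ) (φ • g x) (Icc 0 1) x :=
    (hFTC.const_smul φ).const_add X
  have hP : HasDerivWithinAt P (φ • g x) (Icc (0:ℝ) 1) x :=
    hF.congr (fun y hy => hPeq y hy) (hPeq x hx')
  refine hP.mono_of_mem_nhdsWithin ?_
  rw [mem_nhdsWithin]
  exact ⟨Iio 1, isOpen_Iio, hx.2, fun y hy => ⟨hx.1.trans hy.2, hy.1.le⟩⟩

lemma exp_sub_one_le_mul_exp (K : ℝ) : Real.exp K - 1 ≤ K * Real.exp K := by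
  have h := Real.add_one_le_exp (-K)
  have he : Real.exp (-K) * Real.exp K = 1 := by rw [← Real.exp_add]; simp
  nlinarith [Real.exp_pos K]


set_option maxHeartbeats 1000000 in
/-- Lemma 1 (Lipschitz continuity of the predictor operator): if `P₁, P₂` solve the
predictor integral equation for data `(X₁, U₁, φ₁)` and `(X₂, U₂, φ₂)` respectively,
with `f` globally Lipschitz with constant `C_f`, `f 0 0 = 0`, `‖Xᵢ‖ ≤ X̄`,
`|Uᵢ| ≤ Ū` on `[0,1]`, and `φᵢ ∈ [D̲, D̄]`, then
`sup_{s∈[0,1]} ‖P₁ s − P₂ s‖ ≤ C_P (‖X₁ − X₂‖ + sup_{s∈[0,1]} |U₁ s − U₂ s| + |φ₁ − φ₂|)`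
with `C_P = e^{D̄ C_f} max {1, Ξ, D̄ C_f}` and `Ξ = C_f (Ū + e^{D̄ C_f}(X̄ + C_f D̄ Ū))`. -/
theorem predictor_operator_lipschitz {n : ℕ}
    (f : EuclideanSpace ℝ (Fin n) → ℝ → EuclideanSpace ℝ (Fin n))
    (Cf : ℝ) (hCf : 0 < Cf)
    (hf : ∀ X₁ X₂ : EuclideanSpace ℝ (Fin n), ∀ u₁ u₂ : ℝ,
      ‖f X₁ u₁ - f X₂ u₂‖ ≤ Cf * (‖X₁ - X₂‖ + |u₁ - u₂|))
    (hf0 : f 0 0 = 0)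
    (Dlow Dbar Xbar Ubar : ℝ)
    (hD : 0 < Dlow) (hDD : Dlow ≤ Dbar) (hXbar : 0 < Xbar) (hUbar : 0 < Ubar)
    (X₁ X₂ : EuclideanSpace ℝ (Fin n)) (U₁ U₂ : ℝ → ℝ)
    (hU₁ : ContinuousOn U₁ (Icc 0 1)) (hU₂ : ContinuousOn U₂ (Icc 0 1))
    (φ₁ φ₂ : ℝ) (hφ₁ : φ₁ ∈ Icc Dlow Dbar) (hφ₂ : φ₂ ∈ Icc Dlow Dbar)
    (P₁ P₂ : ℝ → EuclideanSpace ℝ (Fin n))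
    (hP₁ : ContinuousOn P₁ (Icc 0 1)) (hP₂ : ContinuousOn P₂ (Icc 0 1))
    (hPeq₁ : ∀ s ∈ Icc (0:ℝ) 1, P₁ s = X₁ + φ₁ • ∫ θ in (0:ℝ)..s, f (P₁ θ) (U₁ θ))
    (hPeq₂ : ∀ s ∈ Icc (0:ℝ) 1, P₂ s = X₂ + φ₂ • ∫ θ in (0:ℝ)..s, f (P₂ θ) (U₂ θ))
    (hX₁ : ‖X₁‖ ≤ Xbar) (hX₂ : ‖X₂‖ ≤ Xbar)
    (hU₁b : ∀ s ∈ Icc (0:ℝ) 1, |U₁ s| ≤ Ubar)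
    (hU₂b : ∀ s ∈ Icc (0:ℝ) 1, |U₂ s| ≤ Ubar)
    (Ξ CP : ℝ)
    (hΞ : Ξ = Cf * (Ubar + Real.exp (Dbar * Cf) * (Xbar + Cf * Dbar * Ubar)))
    (hCP : CP = Real.exp (Dbar * Cf) * max 1 (max Ξ (Dbar * Cf))) :
    ∀ s ∈ Icc (0:ℝ) 1,
      ‖P₁ s - P₂ s‖ ≤
        CP * (‖X₁ - X₂‖ + (⨆ s : Icc (0:ℝ) 1, |U₁ s - U₂ s|) + |φ₁ - φ₂|) := by
  have hDbar : (0:ℝ) < Dbar := hD.trans_le hDD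
  set K : ℝ := Dbar * Cf with hKdef
  have hK : 0 < K := mul_pos hDbar hCf
  have hE : (0:ℝ) < Real.exp K := Real.exp_pos K
  -- f is Lipschitz, hence continuous
  have hlip : LipschitzWith (Real.toNNReal (2*Cf))
      (fun p : EuclideanSpace ℝ (Fin n) × ℝ => f p.1 p.2) := by
    apply LipschitzWith.of_dist_le_mul
    intro a b
    calc dist (f a.1 a.2) (f b.1 b.2) = ‖f a.1 a.2 - f b.1 b.2‖ := dist_eq_norm _ _
    _ ≤ Cf * (‖a.1 - b.1‖ + |a.2 - b.2|) := hf _ _ _ _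
    _ ≤ Cf * (dist a b + dist a b) := by
        have h1 : ‖a.1 - b.1‖ ≤ dist a b := by
          rw [← dist_eq_norm, Prod.dist_eq]; exact le_max_left _ _
        have h2 : |a.2 - b.2| ≤ dist a b := by
          rw [← Real.dist_eq, Prod.dist_eq]; exact le_max_right _ _
        nlinarith
    _ = (Real.toNNReal (2*Cf) : ℝ) * dist a b := by
        rw [Real.coe_toNNReal _ (by positivity)]; ring
  have hfb : ∀ (X : EuclideanSpace ℝ (Fin n)) (u : ℝ), ‖f X u‖ ≤ Cf * (‖X‖ + |u|) := by
    intro X u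
    simpa [hf0] using hf X 0 u 0
  -- a priori bound on predictors
  have hPbound : ∀ (P : ℝ → EuclideanSpace ℝ (Fin n)) (X : EuclideanSpace ℝ (Fin n))
      (U : ℝ → ℝ) (φ : ℝ), ContinuousOn P (Icc 0 1) → ContinuousOn U (Icc 0 1) →
      φ ∈ Icc Dlow Dbar → ‖X‖ ≤ Xbar → (∀ s ∈ Icc (0:ℝ) 1, |U s| ≤ Ubar) →
      (∀ s ∈ Icc (0:ℝ) 1, P s = X + φ • ∫ θ in (0:ℝ)..s, f (P θ) (U θ)) →
      ∀ s ∈ Icc (0:ℝ) 1, ‖P s‖ ≤ Real.exp K * (Xbar + K * Ubar) := by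
    intro P X U φ hP hU hφ hX hUb hPeq s hs
    have hg : ContinuousOn (fun θ => f (P θ) (U θ)) (Icc 0 1) :=
      hlip.continuous.comp_continuousOn (hP.prodMk hU)
    have hφ' : |φ| ≤ Dbar := abs_le.2 ⟨by linarith [hφ.1], hφ.2⟩
    have hgr := norm_le_gronwallBound_of_norm_deriv_right_le (f := P)
      (f' := fun x => φ • f (P x) (U x)) (δ := Xbar) (K := K) (ε := K * Ubar) (a := 0) (b := 1)
      hP (fun x hx => aux_deriv _ hg P X φ hPeq hx) ?_ ?_
    · have hthis := hgr s hs
      rw [sub_zero, gronwallBound_of_K_ne_0 hK.ne'] at hthis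
      beta_reduce at hthis
      refine hthis.trans ?_
      have h1 : Real.exp (K * s) ≤ Real.exp K := by
        apply Real.exp_le_exp.2; nlinarith [hs.1, hs.2]
      have h2 : Real.exp (K * s) - 1 ≤ K * Real.exp K := by
        have h3 := exp_sub_one_le_mul_exp K
        have h4 : Real.exp (K * s) ≤ Real.exp K := h1
        linarith
      have hdiv : K * Ubar / K = Ubar := by field_simp
      rw [hdiv]
      nlinarith [mul_le_mul_of_nonneg_left h1 hXbar.le, mul_le_mul_of_nonneg_left h2 hUbar.le]
    · have h0 := hPeq 0 ⟨le_rfl, zero_le_one⟩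
      rw [intervalIntegral.integral_same, smul_zero, add_zero] at h0
      rw [h0]; exact hX
    · intro x hx
      have hx1 : x ∈ Icc (0:ℝ) 1 := ⟨hx.1, hx.2.le⟩
      have hUx := hUb x hx1
      calc ‖φ • f (P x) (U x)‖ = |φ| * ‖f (P x) (U x)‖ := by
            rw [norm_smul, Real.norm_eq_abs]
      _ ≤ Dbar * (Cf * (‖P x‖ + |U x|)) :=
            mul_le_mul hφ' (hfb _ _) (norm_nonneg _) hDbar.le
      _ ≤ K * ‖P x‖ + K * Ubar := by
            rw [hKdef]; nlinarith [norm_nonneg (P x)]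
  -- sup of |U₁ - U₂|
  have hbdd : BddAbove (range fun s : Icc (0:ℝ) 1 => |U₁ s - U₂ s|) := by
    refine ⟨2 * Ubar, ?_⟩
    rintro _ ⟨s, rfl⟩
    have h1 := hU₁b s s.2; have h2 := hU₂b s s.2
    have h3 : |U₁ s - U₂ s| ≤ |U₁ s| + |U₂ s| := by
      calc |U₁ s - U₂ s| = |U₁ s + -U₂ s| := by ring_nf
      _ ≤ |U₁ s| + |-U₂ s| := abs_add_le _ _
      _ = |U₁ s| + |U₂ s| := by rw [abs_neg]
    linarith
  set supU := ⨆ s : Icc (0:ℝ) 1, |U₁ s - U₂ s| with hsupU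
  have hle : ∀ x ∈ Icc (0:ℝ) 1, |U₁ x - U₂ x| ≤ supU := fun x hx =>
    le_ciSup hbdd (⟨x, hx⟩ : Icc (0:ℝ) 1)
  have hsup0 : 0 ≤ supU := (abs_nonneg _).trans (hle 0 ⟨le_rfl, zero_le_one⟩)
  have hΞeq : Ξ = Cf * (Ubar + Real.exp K * (Xbar + K * Ubar)) := by
    rw [hΞ, hKdef]; ring
  have hΞ0 : 0 ≤ Ξ := by
    rw [hΞeq]
    have h5 : 0 < Xbar + K * Ubar := by nlinarith
    nlinarith [mul_pos hE h5]
  -- bound on ‖f (P₁ x) (U₁ x)‖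
  have hfΞ : ∀ x ∈ Icc (0:ℝ) 1, ‖f (P₁ x) (U₁ x)‖ ≤ Ξ := by
    intro x hx
    have hPx := hPbound P₁ X₁ U₁ φ₁ hP₁ hU₁ hφ₁ hX₁ hU₁b hPeq₁ x hx
    have hUx := hU₁b x hx
    have h := hfb (P₁ x) (U₁ x)
    rw [hΞeq]
    nlinarith [mul_le_mul_of_nonneg_left hPx hCf.le, mul_le_mul_of_nonneg_left hUx hCf.le]
  -- Gronwall for the difference
  set ε : ℝ := Ξ * |φ₁ - φ₂| + K * supU with hεdef
  have hε0 : 0 ≤ ε := add_nonneg (mul_nonneg hΞ0 (abs_nonneg _)) (mul_nonneg hK.le hsup0)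
  have hg₁ : ContinuousOn (fun θ => f (P₁ θ) (U₁ θ)) (Icc 0 1) :=
    hlip.continuous.comp_continuousOn (hP₁.prodMk hU₁)
  have hg₂ : ContinuousOn (fun θ => f (P₂ θ) (U₂ θ)) (Icc 0 1) :=
    hlip.continuous.comp_continuousOn (hP₂.prodMk hU₂)
  have hφ₂' : |φ₂| ≤ Dbar := abs_le.2 ⟨by linarith [hφ₂.1], hφ₂.2⟩
  clear_value K supU ε
  have hgr := norm_le_gronwallBound_of_norm_deriv_right_le (f := fun s => P₁ s - P₂ s)
    (f' := fun x => φ₁ • f (P₁ x) (U₁ x) - φ₂ • f (P₂ x) (U₂ x))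
    (δ := ‖X₁ - X₂‖) (K := K) (ε := ε) (a := 0) (b := 1)
    (hP₁.sub hP₂)
    (fun x hx => (aux_deriv _ hg₁ P₁ X₁ φ₁ hPeq₁ hx).sub (aux_deriv _ hg₂ P₂ X₂ φ₂ hPeq₂ hx))
    ?_ ?_
  · intro s hs
    have hthis := hgr s hs
    rw [sub_zero, gronwallBound_of_K_ne_0 hK.ne'] at hthis
    beta_reduce at hthis
    have h1 : Real.exp (K * s) ≤ Real.exp K := by
      apply Real.exp_le_exp.2; nlinarith [hs.1, hs.2]
    have h2 : Real.exp (K * s) - 1 ≤ K * Real.exp K := by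
      have h3 := exp_sub_one_le_mul_exp K
      linarith
    have h15 : (0:ℝ) ≤ Real.exp (K * s) - 1 := by
      nlinarith [Real.one_le_exp (by nlinarith [hs.1] : (0:ℝ) ≤ K * s)]
    have step1 : ‖P₁ s - P₂ s‖ ≤ ‖X₁ - X₂‖ * Real.exp K + ε * Real.exp K := by
      have ha : ‖X₁ - X₂‖ * Real.exp (K * s) ≤ ‖X₁ - X₂‖ * Real.exp K :=
        mul_le_mul_of_nonneg_left h1 (norm_nonneg _)
      have hb : ε / K * (Real.exp (K * s) - 1) ≤ ε / K * (K * Real.exp K) :=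
        mul_le_mul_of_nonneg_left h2 (div_nonneg hε0 hK.le)
      have hc : ε / K * (K * Real.exp K) = ε * Real.exp K := by field_simp <;> ring
      linarith
    refine step1.trans ?_
    -- compare with CP
    have hCP1 : Real.exp K ≤ CP := by
      rw [hCP]
      nlinarith [le_max_left (1:ℝ) (max Ξ K)]
    have hCP2 : Real.exp K * Ξ ≤ CP := by
      rw [hCP]
      have : Ξ ≤ max 1 (max Ξ K) := le_trans (le_max_left Ξ K) (le_max_right 1 _)
      nlinarith
    have hCP3 : Real.exp K * K ≤ CP := by
      rw [hCP]
      have : K ≤ max 1 (max Ξ K) := le_trans (le_max_right Ξ K) (le_max_right 1 _)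
      nlinarith
    have e1 : ‖X₁ - X₂‖ * Real.exp K ≤ CP * ‖X₁ - X₂‖ := by
      nlinarith [mul_le_mul_of_nonneg_right hCP1 (norm_nonneg (X₁ - X₂))]
    have e2 : ε * Real.exp K ≤ CP * supU + CP * |φ₁ - φ₂| := by
      rw [hεdef]
      have f2 := mul_le_mul_of_nonneg_right hCP2 (abs_nonneg (φ₁ - φ₂))
      have f3 := mul_le_mul_of_nonneg_right hCP3 hsup0
      nlinarith
    calc ‖X₁ - X₂‖ * Real.exp K + ε * Real.exp K
        ≤ CP * ‖X₁ - X₂‖ + (CP * supU + CP * |φ₁ - φ₂|) := by linarith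
    _ = CP * (‖X₁ - X₂‖ + supU + |φ₁ - φ₂|) := by ring
  · have h01 := hPeq₁ 0 ⟨le_rfl, zero_le_one⟩
    have h02 := hPeq₂ 0 ⟨le_rfl, zero_le_one⟩
    rw [intervalIntegral.integral_same, smul_zero, add_zero] at h01 h02
    simp only [h01, h02]; exact le_rfl
  · intro x hx
    have hx1 : x ∈ Icc (0:ℝ) 1 := ⟨hx.1, hx.2.le⟩
    have hΔU := hle x hx1
    have hΞx := hfΞ x hx1
    have hLip := hf (P₁ x) (P₂ x) (U₁ x) (U₂ x)
    have hdecomp : φ₁ • f (P₁ x) (U₁ x) - φ₂ • f (P₂ x) (U₂ x)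
        = (φ₁ - φ₂) • f (P₁ x) (U₁ x) + φ₂ • (f (P₁ x) (U₁ x) - f (P₂ x) (U₂ x)) := by
      rw [sub_smul, smul_sub]; abel
    calc ‖φ₁ • f (P₁ x) (U₁ x) - φ₂ • f (P₂ x) (U₂ x)‖
        ≤ ‖(φ₁ - φ₂) • f (P₁ x) (U₁ x)‖ + ‖φ₂ • (f (P₁ x) (U₁ x) - f (P₂ x) (U₂ x))‖ := by
          rw [hdecomp]; exact norm_add_le _ _
    _ = |φ₁ - φ₂| * ‖f (P₁ x) (U₁ x)‖ + |φ₂| * ‖f (P₁ x) (U₁ x) - f (P₂ x) (U₂ x)‖ := by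
          rw [norm_smul, norm_smul, Real.norm_eq_abs, Real.norm_eq_abs]
    _ ≤ |φ₁ - φ₂| * Ξ + Dbar * (Cf * (‖P₁ x - P₂ x‖ + |U₁ x - U₂ x|)) := by
          refine add_le_add (mul_le_mul_of_nonneg_left hΞx (abs_nonneg _))
            (mul_le_mul hφ₂' hLip (norm_nonneg _) hDbar.le)
    _ ≤ K * ‖P₁ x - P₂ x‖ + ε := by
          rw [hεdef, hKdef]
          nlinarith [norm_nonneg (P₁ x - P₂ x), abs_nonneg (φ₁ - φ₂)]
end

section
/- Let a ≥ 0, b > 0, and let p ∈ (0,1) and q > 0 satisfy 1/p − 1/q = 1. Then a^p / p − b^{−q} / q ≤ a b. -/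
/-- Reverse Young's inequality (Appendix A): for `a ≥ 0`, `b > 0`, `p ∈ (0,1)`,
`q > 0` with `1/p − 1/q = 1`, one has `a^p / p − b^{−q} / q ≤ a b`. -/
theorem reverse_young_inequality
    (a b p q : ℝ) (ha : 0 ≤ a) (hb : 0 < b)
    (hp : p ∈ Set.Ioo (0:ℝ) 1) (hq : 0 < q)
    (hpq : 1 / p - 1 / q = 1) :
    a ^ p / p - b ^ (-q) / q ≤ a * b := by
  obtain ⟨hp0, hp1⟩ := hp
  have hab : 0 ≤ a * b := mul_nonneg ha hb.le
  have hconj : (1/p).HolderConjugate (q/p) := by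
    rw [Real.holderConjugate_iff]
    constructor
    · rw [lt_div_iff₀ hp0]; linarith
    · field_simp
      field_simp at hpq
      linarith
  have key := Real.young_inequality_of_nonneg
      (Real.rpow_nonneg hab p) (Real.rpow_nonneg hb.le (-p)) hconj
  have h1 : ((a*b) ^ p) ^ (1/p) = a * b := by
    rw [← Real.rpow_mul hab, mul_one_div, div_self hp0.ne', Real.rpow_one]
  have h2 : (b ^ (-p)) ^ (q/p) = b ^ (-q) := by
    rw [← Real.rpow_mul hb.le]
    congr 1
    field_simp
  have h3 : (a*b) ^ p * b ^ (-p) = a ^ p := by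
    rw [Real.mul_rpow ha hb.le, mul_assoc, ← Real.rpow_add hb]
    simp
  rw [h1, h2, h3] at key
  rw [div_div_eq_mul_div, div_div_eq_mul_div] at key
  have hk : a ^ p ≤ (a*b) * p + b ^ (-q) * p / q := by
    convert key using 2 <;> ring
  rw [div_sub_div _ _ hp0.ne' hq.ne', div_le_iff₀ (mul_pos hp0 hq)]
  have hd : b ^ (-q) * p / q * q = b ^ (-q) * p := div_mul_cancel₀ _ hq.ne'
  nlinarith [mul_le_mul_of_nonneg_right hk hq.le]
end

section
/- Let C₁ ≥ 1, b, γ, D > 0, T ∈ ℝ, X ∈ ℝⁿ, and let w : [0,1] → ℝ be square-integrable. Let V : ℝⁿ → ℝ satisfy |X|² ≤ V(X) ≤ C₁ |X|². Define N := 1 + V(X) + b ∫₀¹ (1+x) w(x)² dx and W := D log N + (b/γ) T². Then |X|² + ‖w‖₂² ≥ (1 / max{C₁, 2b}) ( 2 e^{W/(2D)} − e^{(b/(γD)) T²} − 1 ), where ‖w‖₂² = ∫₀¹ w(x)² dx. -/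
open MeasureTheory

/-- Inequality (62) in the proof of Theorem 3: with
`N = 1 + V(X) + b∫₀¹(1+x)w(x)²dx` and `W = D log N + (b/γ)T²`, where
`|X|² ≤ V(X) ≤ C₁|X|²`, one has
`|X|² + ‖w‖₂² ≥ (1/max{C₁, 2b})(2e^{W/(2D)} − e^{(b/(γD))T²} − 1)`. -/
theorem state_norm_lower_bound {n : ℕ}
    (C₁ b γ D : ℝ) (hC₁ : 1 ≤ C₁) (hb : 0 < b) (hγ : 0 < γ) (hD : 0 < D)
    (T : ℝ) (X : EuclideanSpace ℝ (Fin n))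
    (w : ℝ → ℝ)
    (hw2 : IntervalIntegrable (fun x => w x ^ 2) volume 0 1)
    (V : EuclideanSpace ℝ (Fin n) → ℝ)
    (hV : ‖X‖ ^ 2 ≤ V X ∧ V X ≤ C₁ * ‖X‖ ^ 2)
    (N W : ℝ)
    (hN : N = 1 + V X + b * ∫ x in (0:ℝ)..1, (1 + x) * w x ^ 2)
    (hW : W = D * Real.log N + (b / γ) * T ^ 2) :
    ‖X‖ ^ 2 + (∫ x in (0:ℝ)..1, w x ^ 2) ≥
      (1 / max C₁ (2 * b)) *
        (2 * Real.exp (W / (2 * D)) - Real.exp ((b / (γ * D)) * T ^ 2) - 1) := by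
  obtain ⟨hV1, hV2⟩ := hV
  have hX : (0:ℝ) ≤ ‖X‖ ^ 2 := sq_nonneg _
  -- integrability of (1+x) * w x ^ 2
  have hint : IntervalIntegrable (fun x => (1 + x) * w x ^ 2) volume 0 1 :=
    hw2.continuousOn_mul (by fun_prop)
  have hw0 : 0 ≤ ∫ x in (0:ℝ)..1, w x ^ 2 :=
    intervalIntegral.integral_nonneg (by norm_num) (fun x _ => sq_nonneg _)
  have hI0 : 0 ≤ ∫ x in (0:ℝ)..1, (1 + x) * w x ^ 2 := by
    apply intervalIntegral.integral_nonneg (by norm_num)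
    intro x hx
    have : (0:ℝ) ≤ 1 + x := by linarith [hx.1]
    positivity
  have hI2 : (∫ x in (0:ℝ)..1, (1 + x) * w x ^ 2) ≤ 2 * ∫ x in (0:ℝ)..1, w x ^ 2 := by
    rw [← intervalIntegral.integral_const_mul]
    apply intervalIntegral.integral_mono_on (by norm_num) hint (hw2.const_mul 2)
    intro x hx
    nlinarith [sq_nonneg (w x), hx.2]
  have hN1 : (1:ℝ) ≤ N := by nlinarith
  have hNpos : (0:ℝ) < N := by linarith
  set a := Real.exp ((b / (γ * D)) * T ^ 2) with ha
  have hapos : 0 < a := Real.exp_pos _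
  set x := Real.exp (W / (2 * D)) with hx
  have hxpos : 0 < x := Real.exp_pos _
  have hxsq : x ^ 2 = N * a := by
    have : x ^ 2 = Real.exp (W / D) := by
      rw [hx, ← Real.exp_nat_mul]
      congr 1
      field_simp
      ring
    rw [this, hW]
    have : (D * Real.log N + b / γ * T ^ 2) / D
        = Real.log N + b / (γ * D) * T ^ 2 := by field_simp
    rw [this, Real.exp_add, Real.exp_log hNpos]
  have hkey : 2 * x ≤ N + a := by nlinarith [sq_nonneg (N - a), sq_nonneg (N + a - 2 * x)]
  have hM : 0 < max C₁ (2 * b) := lt_of_lt_of_le (by linarith) (le_max_left _ _)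
  rw [ge_iff_le, one_div, inv_mul_le_iff₀ hM]
  have h1 : C₁ ≤ max C₁ (2 * b) := le_max_left _ _
  have h2 : 2 * b ≤ max C₁ (2 * b) := le_max_right _ _
  nlinarith [mul_le_mul_of_nonneg_right h1 hX, mul_le_mul_of_nonneg_right h2 hw0,
    mul_le_mul_of_nonneg_left hI2 hb.le]
end
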